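/- arXiv:1909.09793 — 3 statements merged into one kernel-verified Lean document; each statement's English description precedes it below -/
import Mathlib

section
/- For all p, q, n ≥ 1: the sum over i ≤ p and j ≤ q of C(p,i)·C(q,j)·m_{ij}(n) equals C(n + pq - 1, n), where m_{ij}(n) is the number of contingency matrices of size i×j and weight n. -/
def IsCM {p q : ℕ} (M : Matrix (Fin p) (Fin q) ℕ) : Prop :=
  (∀ i, ∃ j, M i j ≠ 0) ∧ (∀ j, ∃ i, M i j ≠ 0)

/-- `m_{pq}(n)`: the number of contingency matrices of size `p×q` and weight `n`. -/
noncomputable def cmCount (p q n : ℕ) : ℕ :=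
  Nat.card {M : Matrix (Fin p) (Fin q) ℕ // IsCM M ∧ ∑ i, ∑ j, M i j = n}

namespace CMaux

open Finset

variable {p q : ℕ}

/-- Entries are bounded by the total sum. -/
lemma entry_le {n : ℕ} {M : Matrix (Fin p) (Fin q) ℕ} (h : ∑ i, ∑ j, M i j = n)
    (i : Fin p) (j : Fin q) : M i j ≤ n := by
  calc M i j ≤ ∑ j, M i j := Finset.single_le_sum (fun _ _ => Nat.zero_le _) (mem_univ j)
    _ ≤ ∑ i, ∑ j, M i j :=
        Finset.single_le_sum (f := fun i => ∑ j, M i j)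
          (fun _ _ => Nat.zero_le _) (mem_univ i)
    _ = n := h

instance finWeight (n : ℕ) : Finite {M : Matrix (Fin p) (Fin q) ℕ // ∑ i, ∑ j, M i j = n} := by
  apply Finite.of_injective
    (fun M => (fun i j => (⟨M.1 i j, Nat.lt_succ_of_le (entry_le M.2 i j)⟩ : Fin (n + 1)) :
      Fin p → Fin q → Fin (n + 1)))
  intro M M' h
  ext i j
  exact congrArg Fin.val (congrFun (congrFun h i) j)

instance finCM (n : ℕ) :
    Finite {M : Matrix (Fin p) (Fin q) ℕ // IsCM M ∧ ∑ i, ∑ j, M i j = n} :=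
  Finite.of_injective
    (fun M => (⟨M.1, M.2.2⟩ : {M : Matrix (Fin p) (Fin q) ℕ // ∑ i, ∑ j, M i j = n}))
    (fun M M' h => Subtype.ext (Subtype.mk_eq_mk.mp h))

open Classical in
noncomputable def rowSupp (M : Matrix (Fin p) (Fin q) ℕ) : Finset (Fin p) :=
  Finset.univ.filter fun i => ∃ j, M i j ≠ 0

def colSupp (M : Matrix (Fin p) (Fin q) ℕ) : Finset (Fin q) :=
  Finset.univ.filter fun j => ∃ i, M i j ≠ 0

lemma mem_rowSupp {M : Matrix (Fin p) (Fin q) ℕ} {i : Fin p} :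
    i ∈ rowSupp M ↔ ∃ j, M i j ≠ 0 := by simp [rowSupp]

lemma mem_colSupp {M : Matrix (Fin p) (Fin q) ℕ} {j : Fin q} :
    j ∈ colSupp M ↔ ∃ i, M i j ≠ 0 := by simp [colSupp]

lemma zero_of_notin_rowSupp {M : Matrix (Fin p) (Fin q) ℕ} {i : Fin p}
    (hi : i ∉ rowSupp M) (j : Fin q) : M i j = 0 := by
  by_contra h; exact hi (mem_rowSupp.2 ⟨j, h⟩)

lemma zero_of_notin_colSupp {M : Matrix (Fin p) (Fin q) ℕ} {j : Fin q}
    (hj : j ∉ colSupp M) (i : Fin p) : M i j = 0 := by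
  by_contra h; exact hj (mem_colSupp.2 ⟨i, h⟩)

/-- Restriction of a matrix to the rows in `s` and columns in `t`. -/
def res (s : Finset (Fin p)) (t : Finset (Fin q)) (M : Matrix (Fin p) (Fin q) ℕ) :
    Matrix (Fin s.card) (Fin t.card) ℕ :=
  fun a b => M (s.orderEmbOfFin rfl a) (t.orderEmbOfFin rfl b)

/-- Extension by zero of a matrix on `s × t`. -/
def exd (s : Finset (Fin p)) (t : Finset (Fin q))
    (N : Matrix (Fin s.card) (Fin t.card) ℕ) : Matrix (Fin p) (Fin q) ℕ :=
  fun i j =>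
    if hi : i ∈ s then
      if hj : j ∈ t then
        N ((s.orderIsoOfFin rfl).symm ⟨i, hi⟩) ((t.orderIsoOfFin rfl).symm ⟨j, hj⟩)
      else 0
    else 0

section lems

variable {α : Type*} [LinearOrder α]

lemma symm_emb (s : Finset α) (a : Fin s.card) (h : s.orderEmbOfFin rfl a ∈ s) :
    (s.orderIsoOfFin rfl).symm ⟨s.orderEmbOfFin rfl a, h⟩ = a := by
  have : (⟨s.orderEmbOfFin rfl a, h⟩ : {x // x ∈ s}) = s.orderIsoOfFin rfl a :=
    Subtype.ext (s.coe_orderIsoOfFin_apply rfl a).symm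
  rw [this, OrderIso.symm_apply_apply]

lemma emb_symm (s : Finset α) (i : α) (hi : i ∈ s) :
    s.orderEmbOfFin rfl ((s.orderIsoOfFin rfl).symm ⟨i, hi⟩) = i := by
  rw [← s.coe_orderIsoOfFin_apply rfl, OrderIso.apply_symm_apply]

lemma sum_fin (s : Finset α) (f : α → ℕ) :
    ∑ a : Fin s.card, f (s.orderEmbOfFin rfl a) = ∑ i ∈ s, f i := by
  rw [← Finset.sum_coe_sort s f]
  exact Fintype.sum_equiv (s.orderIsoOfFin rfl).toEquiv _ _
    (fun a => by rw [RelIso.coe_fn_toEquiv, ← s.coe_orderIsoOfFin_apply rfl])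

end lems

variable {s : Finset (Fin p)} {t : Finset (Fin q)}

lemma exd_apply_mem {N : Matrix (Fin s.card) (Fin t.card) ℕ} {i : Fin p} {j : Fin q}
    (hi : i ∈ s) (hj : j ∈ t) :
    exd s t N i j
      = N ((s.orderIsoOfFin rfl).symm ⟨i, hi⟩) ((t.orderIsoOfFin rfl).symm ⟨j, hj⟩) := by
  simp [exd, hi, hj]

lemma exd_zero_left {N : Matrix (Fin s.card) (Fin t.card) ℕ} {i : Fin p} (j : Fin q)
    (hi : i ∉ s) : exd s t N i j = 0 := by simp [exd, hi]

lemma exd_zero_right {N : Matrix (Fin s.card) (Fin t.card) ℕ} (i : Fin p) {j : Fin q}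
    (hj : j ∉ t) : exd s t N i j = 0 := by simp [exd, hj]

lemma exd_emb {N : Matrix (Fin s.card) (Fin t.card) ℕ} (a : Fin s.card) (b : Fin t.card) :
    exd s t N (s.orderEmbOfFin rfl a) (t.orderEmbOfFin rfl b) = N a b := by
  rw [exd_apply_mem (s.orderEmbOfFin_mem rfl a) (t.orderEmbOfFin_mem rfl b),
    symm_emb, symm_emb]

lemma sum_exd (N : Matrix (Fin s.card) (Fin t.card) ℕ) :
    ∑ i, ∑ j, exd s t N i j = ∑ a, ∑ b, N a b := by
  calc ∑ i, ∑ j, exd s t N i j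
      = ∑ i ∈ s, ∑ j, exd s t N i j :=
        (Finset.sum_subset (Finset.subset_univ s)
          (fun i _ hi => Finset.sum_eq_zero fun j _ => exd_zero_left j hi)).symm
    _ = ∑ i ∈ s, ∑ j ∈ t, exd s t N i j :=
        Finset.sum_congr rfl fun i _ =>
          (Finset.sum_subset (Finset.subset_univ t)
            (fun j _ hj => exd_zero_right i hj)).symm
    _ = ∑ a : Fin s.card, ∑ j ∈ t, exd s t N (s.orderEmbOfFin rfl a) j :=
        (sum_fin s _).symm
    _ = ∑ a : Fin s.card, ∑ b : Fin t.card,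
          exd s t N (s.orderEmbOfFin rfl a) (t.orderEmbOfFin rfl b) :=
        Finset.sum_congr rfl fun a _ => (sum_fin t _).symm
    _ = ∑ a, ∑ b, N a b := by simp [exd_emb]

lemma rowSupp_exd {N : Matrix (Fin s.card) (Fin t.card) ℕ} (hN : IsCM N) :
    rowSupp (exd s t N) = s := by
  ext i
  rw [mem_rowSupp]
  constructor
  · rintro ⟨j, hj⟩
    by_contra hi
    exact hj (exd_zero_left j hi)
  · intro hi
    obtain ⟨b, hb⟩ := hN.1 ((s.orderIsoOfFin rfl).symm ⟨i, hi⟩)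
    refine ⟨t.orderEmbOfFin rfl b, ?_⟩
    rw [exd_apply_mem hi (t.orderEmbOfFin_mem rfl b), symm_emb]
    exact hb

lemma colSupp_exd {N : Matrix (Fin s.card) (Fin t.card) ℕ} (hN : IsCM N) :
    colSupp (exd s t N) = t := by
  ext j
  rw [mem_colSupp]
  constructor
  · rintro ⟨i, hi⟩
    by_contra hj
    exact hi (exd_zero_right i hj)
  · intro hj
    obtain ⟨a, ha⟩ := hN.2 ((t.orderIsoOfFin rfl).symm ⟨j, hj⟩)
    refine ⟨s.orderEmbOfFin rfl a, ?_⟩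
    rw [exd_apply_mem (s.orderEmbOfFin_mem rfl a) hj, symm_emb]
    exact ha

lemma res_exd (N : Matrix (Fin s.card) (Fin t.card) ℕ) :
    res s t (exd s t N) = N := by
  funext a b
  exact exd_emb a b

lemma exd_res (M : Matrix (Fin p) (Fin q) ℕ) :
    exd (rowSupp M) (colSupp M) (res (rowSupp M) (colSupp M) M) = M := by
  funext i j
  by_cases hi : i ∈ rowSupp M
  · by_cases hj : j ∈ colSupp M
    · rw [exd_apply_mem hi hj]
      show M _ _ = M i j
      rw [emb_symm, emb_symm]
    · rw [exd_zero_right i hj]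
      exact (zero_of_notin_colSupp hj i).symm
  · rw [exd_zero_left j hi]
    exact (zero_of_notin_rowSupp hi j).symm

lemma isCM_res (M : Matrix (Fin p) (Fin q) ℕ) :
    IsCM (res (rowSupp M) (colSupp M) M) := by
  constructor
  · intro a
    have ha := (rowSupp M).orderEmbOfFin_mem rfl a
    obtain ⟨j, hj⟩ := mem_rowSupp.1 ha
    have hjc : j ∈ colSupp M := mem_colSupp.2 ⟨_, hj⟩
    refine ⟨((colSupp M).orderIsoOfFin rfl).symm ⟨j, hjc⟩, ?_⟩
    show M _ _ ≠ 0
    rw [emb_symm]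
    exact hj
  · intro b
    have hb := (colSupp M).orderEmbOfFin_mem rfl b
    obtain ⟨i, hi⟩ := mem_colSupp.1 hb
    have hic : i ∈ rowSupp M := mem_rowSupp.2 ⟨_, hi⟩
    refine ⟨((rowSupp M).orderIsoOfFin rfl).symm ⟨i, hic⟩, ?_⟩
    show M _ _ ≠ 0
    rw [emb_symm]
    exact hi

lemma sum_res (M : Matrix (Fin p) (Fin q) ℕ) :
    ∑ a, ∑ b, res (rowSupp M) (colSupp M) M a b = ∑ i, ∑ j, M i j := by
  conv_rhs => rw [← exd_res M]
  rw [sum_exd]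

/-- The fiber equivalence: matrices with prescribed supports correspond to
contingency matrices of the corresponding size. -/
def fiberEquiv (s : Finset (Fin p)) (t : Finset (Fin q)) (n : ℕ) :
    {M : Matrix (Fin p) (Fin q) ℕ //
        (∑ i, ∑ j, M i j = n) ∧ rowSupp M = s ∧ colSupp M = t} ≃
    {N : Matrix (Fin s.card) (Fin t.card) ℕ // IsCM N ∧ ∑ a, ∑ b, N a b = n} where
  toFun M := ⟨res s t M.1, by
    obtain ⟨M, hsum, hs, ht⟩ := M
    constructor
    · have := isCM_res M
      rw [hs, ht] at this
      exact this
    · have := sum_res M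
      rw [hs, ht] at this
      rw [this]
      exact hsum⟩
  invFun N := ⟨exd s t N.1, by
    refine ⟨?_, rowSupp_exd N.2.1, colSupp_exd N.2.1⟩
    rw [sum_exd]
    exact N.2.2⟩
  left_inv M := by
    obtain ⟨M, hsum, hs, ht⟩ := M
    apply Subtype.ext
    show exd s t (res s t M) = M
    subst hs; subst ht
    exact exd_res M
  right_inv N := Subtype.ext (res_exd N.1)

/-- Auxiliary equivalence handling the subtype-of-subtype step. -/
def suppFiberEquiv (n : ℕ) (st : Finset (Fin p) × Finset (Fin q)) :
    {x : {M : Matrix (Fin p) (Fin q) ℕ // ∑ i, ∑ j, M i j = n} //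
        (rowSupp x.1, colSupp x.1) = st} ≃
    {M : Matrix (Fin p) (Fin q) ℕ //
        (∑ i, ∑ j, M i j = n) ∧ rowSupp M = st.1 ∧ colSupp M = st.2} where
  toFun x := ⟨x.1.1, x.1.2, congrArg Prod.fst x.2, congrArg Prod.snd x.2⟩
  invFun M := ⟨⟨M.1, M.2.1⟩, Prod.ext M.2.2.1 M.2.2.2⟩
  left_inv x := rfl
  right_inv M := rfl

/-- The main equivalence. -/
noncomputable def mainEquiv (n : ℕ) :
    {M : Matrix (Fin p) (Fin q) ℕ // ∑ i, ∑ j, M i j = n} ≃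
    Σ st : Finset (Fin p) × Finset (Fin q),
      {N : Matrix (Fin st.1.card) (Fin st.2.card) ℕ // IsCM N ∧ ∑ a, ∑ b, N a b = n} :=
  (Equiv.sigmaFiberEquiv
      (fun x : {M : Matrix (Fin p) (Fin q) ℕ // ∑ i, ∑ j, M i j = n} =>
        (rowSupp x.1, colSupp x.1))).symm.trans
    (Equiv.sigmaCongrRight fun st =>
      (suppFiberEquiv n st).trans (fiberEquiv st.1 st.2 n))

lemma key (n : ℕ) :
    Nat.card {M : Matrix (Fin p) (Fin q) ℕ // ∑ i, ∑ j, M i j = n}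
      = ∑ st : Finset (Fin p) × Finset (Fin q), cmCount st.1.card st.2.card n := by
  rw [Nat.card_congr (mainEquiv n)]
  haveI : ∀ st : Finset (Fin p) × Finset (Fin q),
      Fintype {N : Matrix (Fin st.1.card) (Fin st.2.card) ℕ //
        IsCM N ∧ ∑ a, ∑ b, N a b = n} := fun st => Fintype.ofFinite _
  rw [Nat.card_eq_fintype_card, Fintype.card_sigma]
  exact Finset.sum_congr rfl fun st _ => (Nat.card_eq_fintype_card).symm

lemma count_repl {α : Type*} [Fintype α] [DecidableEq α] (f : α → ℕ) (x : α) :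
    Multiset.count x (∑ y, Multiset.replicate (f y) y) = f x := by
  rw [Multiset.count_sum']
  simp [Multiset.count_replicate, eq_comm]

/-- Stars and bars: counting all matrices with given weight. -/
lemma countAll (n : ℕ) :
    Nat.card {M : Matrix (Fin p) (Fin q) ℕ // ∑ i, ∑ j, M i j = n}
      = (p * q + n - 1).choose n := by
  classical
  -- matrices ≃ functions on the product
  have e1 : {M : Matrix (Fin p) (Fin q) ℕ // ∑ i, ∑ j, M i j = n}
      ≃ {f : Fin p × Fin q → ℕ // ∑ x, f x = n} :=
    { toFun := fun M => ⟨fun x => M.1 x.1 x.2, by rw [Fintype.sum_prod_type]; exact M.2⟩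
      invFun := fun f => ⟨fun i j => f.1 (i, j), by
        rw [← Fintype.sum_prod_type]; exact f.2⟩
      left_inv := fun M => rfl
      right_inv := fun f => rfl }
  have e2 : {f : Fin p × Fin q → ℕ // ∑ x, f x = n} ≃ Sym (Fin p × Fin q) n :=
    { toFun := fun f => ⟨∑ x, Multiset.replicate (f.1 x) x, by
        rw [← Multiset.sum_count_eq_card (fun a _ => Finset.mem_univ a)]
        calc ∑ x, Multiset.count x (∑ y, Multiset.replicate (f.1 y) y)
            = ∑ x, f.1 x := Finset.sum_congr rfl fun x _ => count_repl f.1 x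
          _ = n := f.2⟩
      invFun := fun m => ⟨fun x => m.1.count x, by
        rw [Multiset.sum_count_eq_card (fun a _ => Finset.mem_univ a)]; exact m.2⟩
      left_inv := fun f => by
        apply Subtype.ext
        funext x
        exact count_repl f.1 x
      right_inv := fun m => by
        apply Subtype.ext
        show (∑ y, Multiset.replicate (Multiset.count y m.1) y) = m.1
        ext x
        rw [count_repl (fun y => Multiset.count y m.1) x] }
  rw [Nat.card_congr (e1.trans e2), Nat.card_eq_fintype_card, Sym.card_sym_eq_choose]
  simp

end CMaux

open CMaux Finset in
/-- `Σ_{i≤p, j≤q} C(p,i) C(q,j) m_{ij}(n) = C(n + pq - 1, n)`. -/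
theorem sum_binomial_cmCount (p q n : ℕ) (hp : 1 ≤ p) (hq : 1 ≤ q) (hn : 1 ≤ n) :
    ∑ i ∈ Finset.range (p + 1), ∑ j ∈ Finset.range (q + 1),
      p.choose i * q.choose j * cmCount i j n = (n + p * q - 1).choose n := by
  classical
  have h1 := (key (p := p) (q := q) n).symm.trans (countAll (p := p) (q := q) n)
  rw [Fintype.sum_prod_type] at h1
  have huniv : ∀ (α : Type) [Fintype α] [DecidableEq α] (g : Finset α → ℕ),
      ∑ s : Finset α, g s = ∑ s ∈ (Finset.univ : Finset α).powerset, g s := by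
    intro α _ _ g
    apply Finset.sum_congr _ (fun _ _ => rfl)
    ext s
    simp
  have hinner : ∀ i : ℕ, ∑ t : Finset (Fin q), cmCount i t.card n
      = ∑ j ∈ Finset.range (q + 1), q.choose j * cmCount i j n := by
    intro i
    rw [huniv (Fin q) (fun t => cmCount i t.card n),
      Finset.sum_powerset_apply_card (f := fun j => cmCount i j n)]
    simp
  have h2 : ∑ s : Finset (Fin p), ∑ t : Finset (Fin q), cmCount s.card t.card n
      = ∑ i ∈ Finset.range (p + 1), p.choose i *
          ∑ j ∈ Finset.range (q + 1), q.choose j * cmCount i j n := by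
    calc ∑ s : Finset (Fin p), ∑ t : Finset (Fin q), cmCount s.card t.card n
        = ∑ s : Finset (Fin p),
            ∑ j ∈ Finset.range (q + 1), q.choose j * cmCount s.card j n :=
          Finset.sum_congr rfl fun s _ => hinner s.card
      _ = ∑ i ∈ Finset.range (p + 1), p.choose i *
            ∑ j ∈ Finset.range (q + 1), q.choose j * cmCount i j n := by
          rw [huniv (Fin p)
            (fun s => ∑ j ∈ Finset.range (q + 1), q.choose j * cmCount s.card j n),
            Finset.sum_powerset_apply_card
              (f := fun i => ∑ j ∈ Finset.range (q + 1), q.choose j * cmCount i j n)]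
          simp
  rw [h2] at h1
  calc ∑ i ∈ Finset.range (p + 1), ∑ j ∈ Finset.range (q + 1),
        p.choose i * q.choose j * cmCount i j n
      = ∑ i ∈ Finset.range (p + 1), p.choose i *
          ∑ j ∈ Finset.range (q + 1), q.choose j * cmCount i j n := by
        refine Finset.sum_congr rfl fun i _ => ?_
        rw [Finset.mul_sum]
        exact Finset.sum_congr rfl fun j _ => (mul_assoc _ _ _)
    _ = (p * q + n - 1).choose n := h1
    _ = (n + p * q - 1).choose n := by rw [Nat.add_comm]
end

section
/- The number of contingency matrices of size p×q and weight n is given by m_{pq}(n) = Σ_{i,j} (-1)^{i+j+p+q} C(p,i) C(q,j) C(n+ij-1, n). -/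
open Finset

noncomputable def CM.rowSupp {p q : ℕ} (M : Matrix (Fin p) (Fin q) ℕ) : Finset (Fin p) :=
  by classical exact Finset.univ.filter fun i => ∃ j, M i j ≠ 0

def CM.colSupp {p q : ℕ} (M : Matrix (Fin p) (Fin q) ℕ) : Finset (Fin q) :=
  Finset.univ.filter fun j => ∃ i, M i j ≠ 0

@[simp] lemma CM.mem_rowSupp {p q : ℕ} {M : Matrix (Fin p) (Fin q) ℕ} {i : Fin p} :
    i ∈ CM.rowSupp M ↔ ∃ j, M i j ≠ 0 := by simp [CM.rowSupp]

@[simp] lemma CM.mem_colSupp {p q : ℕ} {M : Matrix (Fin p) (Fin q) ℕ} {j : Fin q} :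
    j ∈ CM.colSupp M ↔ ∃ i, M i j ≠ 0 := by simp [CM.colSupp]

lemma CM.sum_reindex {p q : ℕ} (S : Finset (Fin p)) (T : Finset (Fin q))
    (g : Matrix (Fin p) (Fin q) ℕ) (hg : ∀ i j, g i j ≠ 0 → i ∈ S ∧ j ∈ T) :
    ∑ i, ∑ j, g i j
      = ∑ a : Fin S.card, ∑ b : Fin T.card,
          g (S.orderIsoOfFin rfl a) (T.orderIsoOfFin rfl b) := by
  have h1 : ∑ i, ∑ j, g i j = ∑ i ∈ S, ∑ j ∈ T, g i j := by
    rw [← Finset.sum_subset (Finset.subset_univ S) ?_]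
    · refine Finset.sum_congr rfl fun i _ => ?_
      refine (Finset.sum_subset (Finset.subset_univ T) fun j _ hj => ?_).symm
      by_contra h
      exact hj (hg i j h).2
    · intro i _ hi
      refine Finset.sum_eq_zero fun j _ => ?_
      by_contra h
      exact hi (hg i j h).1
  rw [h1]
  rw [← Finset.sum_coe_sort S, ← Equiv.sum_comp (S.orderIsoOfFin rfl).toEquiv]
  refine Finset.sum_congr rfl fun a _ => ?_
  rw [← Finset.sum_coe_sort T, ← Equiv.sum_comp (T.orderIsoOfFin rfl).toEquiv]
  rfl

noncomputable def CM.fiberEquiv (p q n : ℕ) (S : Finset (Fin p)) (T : Finset (Fin q)) :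
    {M : Matrix (Fin p) (Fin q) ℕ //
        (∑ i, ∑ j, M i j = n) ∧ CM.rowSupp M = S ∧ CM.colSupp M = T}
      ≃ {N : Matrix (Fin S.card) (Fin T.card) ℕ // IsCM N ∧ ∑ a, ∑ b, N a b = n} where
  toFun x :=
    ⟨fun a b => x.1 (S.orderIsoOfFin rfl a) (T.orderIsoOfFin rfl b), by
      obtain ⟨M, hsum, hr, hc⟩ := x
      constructor
      · constructor
        · intro a
          have hex : ∃ j, M ((S.orderIsoOfFin rfl a : Fin p)) j ≠ 0 := by
            rw [← CM.mem_rowSupp (M := M), hr]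
            exact (S.orderIsoOfFin rfl a).2
          obtain ⟨j, hj⟩ := hex
          have hjT : j ∈ T := by
            rw [← hc]; exact CM.mem_colSupp.2 ⟨_, hj⟩
          refine ⟨(T.orderIsoOfFin rfl).symm ⟨j, hjT⟩, ?_⟩
          simpa using hj
        · intro b
          have hex : ∃ i, M i ((T.orderIsoOfFin rfl b : Fin q)) ≠ 0 := by
            rw [← CM.mem_colSupp (M := M), hc]
            exact (T.orderIsoOfFin rfl b).2
          obtain ⟨i, hij⟩ := hex
          have hiS : i ∈ S := by
            rw [← hr]; exact CM.mem_rowSupp.2 ⟨_, hij⟩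
          refine ⟨(S.orderIsoOfFin rfl).symm ⟨i, hiS⟩, ?_⟩
          simpa using hij
      · rw [← CM.sum_reindex S T M ?_]
        · exact hsum
        · intro i j h
          exact ⟨hr ▸ CM.mem_rowSupp.2 ⟨_, h⟩, hc ▸ CM.mem_colSupp.2 ⟨_, h⟩⟩⟩
  invFun y :=
    ⟨fun i j => if h : i ∈ S ∧ j ∈ T then
        y.1 ((S.orderIsoOfFin rfl).symm ⟨i, h.1⟩) ((T.orderIsoOfFin rfl).symm ⟨j, h.2⟩) else 0, by
      obtain ⟨N, hcm, hsum⟩ := y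
      set e := S.orderIsoOfFin rfl with he
      set f := T.orderIsoOfFin rfl with hf
      have key : ∀ a b, (if h : ((e a : Fin p)) ∈ S ∧ ((f b : Fin q)) ∈ T then
          N (e.symm ⟨e a, h.1⟩) (f.symm ⟨f b, h.2⟩) else 0) = N a b := by
        intro a b
        rw [dif_pos ⟨(e a).2, (f b).2⟩]
        congr 1 <;> simp
      refine ⟨?_, ?_, ?_⟩
      · rw [CM.sum_reindex S T (fun i j => if h : i ∈ S ∧ j ∈ T then N (e.symm ⟨i, h.1⟩) (f.symm ⟨j, h.2⟩) else 0) ?_]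
        · simp only [← he, ← hf, key]
          exact hsum
        · intro i j h
          by_contra hc
          rw [dif_neg] at h
          · exact h rfl
          · tauto
      · ext i
        simp only [CM.rowSupp, Finset.mem_filter, Finset.mem_univ, true_and]
        constructor
        · rintro ⟨j, hj⟩
          by_contra hi
          exact hj (by rw [dif_neg (fun h => hi h.1)])
        · intro hi
          obtain ⟨b, hb⟩ := hcm.1 (e.symm ⟨i, hi⟩)
          refine ⟨f b, ?_⟩
          have : (if h : i ∈ S ∧ ((f b : Fin q)) ∈ T then
              N (e.symm ⟨i, h.1⟩) (f.symm ⟨f b, h.2⟩) else 0)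
              = N (e.symm ⟨i, hi⟩) b := by
            rw [dif_pos ⟨hi, (f b).2⟩]
            congr 1
            simp
          rw [this]
          exact hb
      · ext j
        simp only [CM.colSupp, Finset.mem_filter, Finset.mem_univ, true_and]
        constructor
        · rintro ⟨i, hi⟩
          by_contra hj
          exact hi (by rw [dif_neg (fun h => hj h.2)])
        · intro hj
          obtain ⟨a, ha⟩ := hcm.2 (f.symm ⟨j, hj⟩)
          refine ⟨e a, ?_⟩
          have : (if h : ((e a : Fin p)) ∈ S ∧ j ∈ T then
              N (e.symm ⟨e a, h.1⟩) (f.symm ⟨j, h.2⟩) else 0)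
              = N a (f.symm ⟨j, hj⟩) := by
            rw [dif_pos ⟨(e a).2, hj⟩]
            congr 1
            simp
          rw [this]
          exact ha⟩
  left_inv := by
    rintro ⟨M, hsum, hr, hc⟩
    ext i j
    simp only
    by_cases h : i ∈ S ∧ j ∈ T
    · rw [dif_pos h]
      congr 1 <;> simp
    · rw [dif_neg h]
      rcases not_and_or.1 h with hi | hj
      · by_contra hne
        exact hi (hr ▸ CM.mem_rowSupp.2 ⟨j, fun hz => hne hz.symm⟩)
      · by_contra hne
        exact hj (hc ▸ CM.mem_colSupp.2 ⟨i, fun hz => hne hz.symm⟩)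
  right_inv := by
    rintro ⟨N, hcm, hsum⟩
    ext a b
    simp only
    rw [dif_pos ⟨((S.orderIsoOfFin rfl) a).2, ((T.orderIsoOfFin rfl) b).2⟩]
    congr 1 <;> exact (OrderIso.symm_apply_eq _).mpr (Subtype.ext rfl)

lemma CM.fiber_card (p q n : ℕ) (S : Finset (Fin p)) (T : Finset (Fin q)) :
    Nat.card {M : Matrix (Fin p) (Fin q) ℕ //
        (∑ i, ∑ j, M i j = n) ∧ CM.rowSupp M = S ∧ CM.colSupp M = T}
      = cmCount S.card T.card n :=
  Nat.card_congr (CM.fiberEquiv p q n S T)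
/-! ### counting all matrices with given sum -/

lemma CM.sum_count_eq {α : Type*} [Fintype α] [DecidableEq α] (s : Multiset α) :
    ∑ a : α, s.count a = Multiset.card s := by
  rw [← Multiset.toFinset_sum_count_eq]
  exact (Finset.sum_subset (subset_univ _) (fun x _ hx => Multiset.count_eq_zero.2
    (fun h => hx (Multiset.mem_toFinset.2 h)))).symm

noncomputable def CM.symEquiv (α : Type*) [Fintype α] [DecidableEq α] (n : ℕ) :
    {f : α → ℕ // ∑ x, f x = n} ≃ Sym α n := by
  refine Equiv.subtypeEquiv (Finsupp.equivFunOnFinite.symm.trans Multiset.toFinsupp.symm.toEquiv) ?_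
  intro f
  show _ ↔ Multiset.card _ = n
  rw [← CM.sum_count_eq]
  refine Eq.congr_left (Finset.sum_congr rfl fun x _ => ?_).symm
  simp

lemma CM.card_all (p q n : ℕ) :
    Nat.card {M : Matrix (Fin p) (Fin q) ℕ // ∑ i, ∑ j, M i j = n}
      = (p * q + n - 1).choose n := by
  classical
  have e1 : {M : Matrix (Fin p) (Fin q) ℕ // ∑ i, ∑ j, M i j = n}
      ≃ {f : Fin p × Fin q → ℕ // ∑ x, f x = n} := by
    refine Equiv.subtypeEquiv (Equiv.curry (Fin p) (Fin q) ℕ).symm ?_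
    intro M
    show (∑ i, ∑ j, M i j = n) ↔ _
    rw [Fintype.sum_prod_type]
    rfl
  rw [Nat.card_congr (e1.trans (CM.symEquiv _ n)), Nat.card_eq_fintype_card,
    Sym.card_sym_eq_choose]
  simp [Fintype.card_prod]

instance CM.finite_all (p q n : ℕ) :
    Finite {M : Matrix (Fin p) (Fin q) ℕ // ∑ i, ∑ j, M i j = n} := by
  let f : {M : Matrix (Fin p) (Fin q) ℕ // ∑ i, ∑ j, M i j = n} →
      (Fin p → Fin q → Fin (n + 1)) := fun M i j => ⟨M.1 i j, by
    have h1 : M.1 i j ≤ ∑ b, M.1 i b :=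
      Finset.single_le_sum (fun _ _ => Nat.zero_le _) (Finset.mem_univ j)
    have h2 : (∑ b, M.1 i b) ≤ ∑ a, ∑ b, M.1 a b :=
      Finset.single_le_sum (f := fun a => ∑ b, M.1 a b)
        (fun _ _ => Nat.zero_le _) (Finset.mem_univ i)
    have h3 := M.2
    omega⟩
  have hinj : Function.Injective f := by
    intro M N h
    apply Subtype.ext
    funext i j
    exact congrArg Fin.val (congrFun (congrFun h i) j)
  exact Finite.of_injective f hinj

lemma CM.natCard_sigma {ι : Type*} [Fintype ι] (F : ι → Type*) [∀ i, Finite (F i)] :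
    Nat.card (Σ i, F i) = ∑ i, Nat.card (F i) := by
  letI : ∀ i, Fintype (F i) := fun i => Fintype.ofFinite _
  simp [Nat.card_eq_fintype_card, Fintype.card_sigma]

lemma CM.decomp (p q n : ℕ) :
    (p * q + n - 1).choose n
      = ∑ ST : Finset (Fin p) × Finset (Fin q), cmCount ST.1.card ST.2.card n := by
  classical
  rw [← CM.card_all p q n]
  set Ω := {M : Matrix (Fin p) (Fin q) ℕ // ∑ i, ∑ j, M i j = n}
  have e1 : Ω ≃ Σ ST : Finset (Fin p) × Finset (Fin q),
      {x : Ω // (CM.rowSupp x.1, CM.colSupp x.1) = ST} :=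
    (Equiv.sigmaFiberEquiv fun x : Ω => (CM.rowSupp x.1, CM.colSupp x.1)).symm
  rw [Nat.card_congr e1, CM.natCard_sigma]
  refine Finset.sum_congr rfl fun ST _ => ?_
  rw [← CM.fiber_card p q n ST.1 ST.2]
  refine Nat.card_congr ?_
  refine (Equiv.subtypeSubtypeEquivSubtypeInter
    (fun M : Matrix (Fin p) (Fin q) ℕ => ∑ i, ∑ j, M i j = n)
    (fun M => (CM.rowSupp M, CM.colSupp M) = ST)).trans
    (Equiv.subtypeEquivRight fun M => ?_)
  rw [Prod.mk.injEq]

lemma CM.sum_card {m : ℕ} (g : ℕ → ℕ) :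
    ∑ S : Finset (Fin m), g S.card = ∑ i ∈ Finset.range (m + 1), m.choose i * g i := by
  classical
  rw [← Finset.powerset_univ]
  rw [Finset.sum_powerset_apply_card]
  simp [Finset.card_univ]

lemma CM.keyA (p q n : ℕ) :
    (p * q + n - 1).choose n
      = ∑ i ∈ Finset.range (p + 1), ∑ j ∈ Finset.range (q + 1),
          p.choose i * q.choose j * cmCount i j n := by
  classical
  rw [CM.decomp p q n, Fintype.sum_prod_type]
  rw [CM.sum_card (fun i => ∑ T : Finset (Fin q), cmCount i T.card n)]
  refine Finset.sum_congr rfl fun i _ => ?_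
  rw [CM.sum_card (fun j => cmCount i j n), Finset.mul_sum]
  refine Finset.sum_congr rfl fun j _ => ?_
  ring

lemma CM.orth (p k : ℕ) :
    ∑ i ∈ Finset.range (p + 1), (-1 : ℤ) ^ i * (p.choose i) * (i.choose k)
      = if k = p then (-1 : ℤ) ^ p else 0 := by
  by_cases hk : k ≤ p
  · have h1 : ∑ i ∈ Finset.range (p + 1), (-1 : ℤ) ^ i * (p.choose i) * (i.choose k)
        = ∑ i ∈ Finset.Ico k (p + 1), (-1 : ℤ) ^ i * (p.choose i) * (i.choose k) := by
      refine (Finset.sum_subset ?_ ?_).symm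
      · intro x hx
        rw [Finset.mem_Ico] at hx
        exact Finset.mem_range.2 hx.2
      · intro x hx hx'
        rw [Finset.mem_range] at hx
        rw [Finset.mem_Ico, not_and_or] at hx'
        have : x < k := by omega
        rw [Nat.choose_eq_zero_of_lt this]
        simp
    rw [h1, Finset.sum_Ico_eq_sum_range]
    have h2 : ∀ j ∈ Finset.range (p + 1 - k),
        (-1 : ℤ) ^ (k + j) * (p.choose (k + j)) * ((k + j).choose k)
          = (-1 : ℤ) ^ k * (p.choose k) * ((-1 : ℤ) ^ j * ((p - k).choose j)) := by
      intro j hj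
      rw [Finset.mem_range] at hj
      have hkj : k + j ≤ p := by omega
      have hsk : k ≤ k + j := Nat.le_add_right _ _
      have := Nat.choose_mul (n := p) hsk
      rw [Nat.add_sub_cancel_left] at this
      have hcast : ((p.choose (k + j) : ℤ)) * ((k + j).choose k)
          = (p.choose k : ℤ) * ((p - k).choose j) := by exact_mod_cast congrArg (Nat.cast (R := ℤ)) this
      rw [pow_add]
      linear_combination ((-1 : ℤ) ^ k * (-1 : ℤ) ^ j) * hcast
    rw [Finset.sum_congr rfl h2, ← Finset.mul_sum]
    have h3 : p + 1 - k = (p - k) + 1 := by omega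
    rw [h3, Int.alternating_sum_range_choose]
    by_cases hkp : k = p
    · subst hkp; simp
    · have : p - k ≠ 0 := by omega
      rw [if_neg this, if_neg hkp]
      simp
  · have : ∀ i ∈ Finset.range (p + 1), (-1 : ℤ) ^ i * (p.choose i) * (i.choose k) = 0 := by
      intro i hi
      rw [Finset.mem_range] at hi
      rw [Nat.choose_eq_zero_of_lt (show i < k by omega)]
      simp
    rw [Finset.sum_congr rfl this]
    rw [if_neg (by omega)]
    simp

lemma CM.inv1 (p : ℕ) (g : ℕ → ℤ) :
    ∑ i ∈ Finset.range (p + 1), (-1 : ℤ) ^ (i + p) * (p.choose i)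
        * (∑ k ∈ Finset.range (i + 1), (i.choose k : ℤ) * g k) = g p := by
  have hext : ∀ i ∈ Finset.range (p + 1),
      (-1 : ℤ) ^ (i + p) * (p.choose i) * (∑ k ∈ Finset.range (i + 1), (i.choose k : ℤ) * g k)
        = ∑ k ∈ Finset.range (p + 1), (-1 : ℤ) ^ (i + p) * (p.choose i) * ((i.choose k : ℤ) * g k) := by
    intro i hi
    rw [Finset.mem_range] at hi
    rw [Finset.mul_sum]
    refine Finset.sum_subset (Finset.range_subset_range.2 (by omega)) ?_
    intro k _ hk
    rw [Finset.mem_range] at hk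
    rw [Nat.choose_eq_zero_of_lt (show i < k by omega)]
    simp
  rw [Finset.sum_congr rfl hext, Finset.sum_comm]
  have hin : ∀ k ∈ Finset.range (p + 1),
      ∑ i ∈ Finset.range (p + 1), (-1 : ℤ) ^ (i + p) * (p.choose i) * ((i.choose k : ℤ) * g k)
        = (if k = p then (1 : ℤ) else 0) * g k := by
    intro k _
    have : ∀ i ∈ Finset.range (p + 1),
        (-1 : ℤ) ^ (i + p) * (p.choose i) * ((i.choose k : ℤ) * g k)
          = (-1 : ℤ) ^ p * ((-1 : ℤ) ^ i * (p.choose i) * (i.choose k)) * g k := by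
      intro i _
      rw [pow_add]
      ring
    rw [Finset.sum_congr rfl this, ← Finset.sum_mul, ← Finset.mul_sum, CM.orth]
    by_cases hk : k = p
    · subst hk
      rw [if_pos rfl, if_pos rfl, ← pow_add, ← two_mul, pow_mul]
      norm_num
    · rw [if_neg hk, if_neg hk]
      simp
  rw [Finset.sum_congr rfl hin]
  simp [ite_mul]

/-- `m_{pq}(n) = Σ_{i,j} (-1)^{i+j+p+q} C(p,i) C(q,j) C(n+ij-1, n)`. -/
theorem cmCount_eq_alternating_sum (p q n : ℕ) (hp : 1 ≤ p) (hq : 1 ≤ q) (hn : 1 ≤ n) :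
    (cmCount p q n : ℤ) =
      ∑ i ∈ Finset.range (p + 1), ∑ j ∈ Finset.range (q + 1),
        (-1) ^ (i + j + p + q) * (p.choose i : ℤ) * (q.choose j : ℤ)
          * ((n + i * j - 1).choose n : ℤ) := by
  have hA : ∀ i j : ℕ, ((n + i * j - 1).choose n : ℤ)
      = ∑ k ∈ Finset.range (i + 1), (i.choose k : ℤ)
          * (∑ l ∈ Finset.range (j + 1), (j.choose l : ℤ) * (cmCount k l n : ℤ)) := by
    intro i j
    have hc : n + i * j - 1 = i * j + n - 1 := by omega
    have h := CM.keyA i j n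
    rw [hc]
    calc ((i * j + n - 1).choose n : ℤ)
        = ((∑ k ∈ Finset.range (i + 1), ∑ l ∈ Finset.range (j + 1),
            i.choose k * j.choose l * cmCount k l n : ℕ) : ℤ) := by rw [h]
      _ = ∑ k ∈ Finset.range (i + 1), (i.choose k : ℤ)
            * (∑ l ∈ Finset.range (j + 1), (j.choose l : ℤ) * (cmCount k l n : ℤ)) := by
          push_cast
          refine Finset.sum_congr rfl fun k _ => ?_
          rw [Finset.mul_sum]
          refine Finset.sum_congr rfl fun l _ => ?_
          ring
  symm
  calc ∑ i ∈ Finset.range (p + 1), ∑ j ∈ Finset.range (q + 1),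
        (-1 : ℤ) ^ (i + j + p + q) * (p.choose i : ℤ) * (q.choose j : ℤ)
          * ((n + i * j - 1).choose n : ℤ)
      = ∑ j ∈ Finset.range (q + 1), (-1 : ℤ) ^ (j + q) * (q.choose j : ℤ)
          * (∑ i ∈ Finset.range (p + 1), (-1 : ℤ) ^ (i + p) * (p.choose i : ℤ)
            * (∑ k ∈ Finset.range (i + 1), (i.choose k : ℤ)
              * (∑ l ∈ Finset.range (j + 1), (j.choose l : ℤ) * (cmCount k l n : ℤ)))) := by
        rw [Finset.sum_comm]
        refine Finset.sum_congr rfl fun j _ => ?_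
        rw [Finset.mul_sum]
        refine Finset.sum_congr rfl fun i _ => ?_
        rw [hA i j, show i + j + p + q = (j + q) + (i + p) by ring, pow_add]
        ring
    _ = ∑ j ∈ Finset.range (q + 1), (-1 : ℤ) ^ (j + q) * (q.choose j : ℤ)
          * (∑ l ∈ Finset.range (j + 1), (j.choose l : ℤ) * (cmCount p l n : ℤ)) := by
        refine Finset.sum_congr rfl fun j _ => ?_
        rw [CM.inv1 p (fun k => ∑ l ∈ Finset.range (j + 1), (j.choose l : ℤ) * (cmCount k l n : ℤ))]
    _ = (cmCount p q n : ℤ) := CM.inv1 q (fun l => (cmCount p l n : ℤ))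
end

section
/- For ordered partitions α, β of n, the set of contingency matrices with row-sum vector α and column-sum vector β is in bijection with the double coset space S_α \ S_n / S_β, where S_α = S_{α_1}×...×S_{α_p} is the parabolic (Young) subgroup of S_n. -/
/-- The index of the block (for the ordered partition `α`) containing position `x`:
positions `0,…,α_0-1` form block `0`, the next `α_1` positions form block `1`, etc. -/
def blk {n p : ℕ} (α : Fin p → ℕ) (x : Fin n) : ℕ :=
  (Finset.univ.filter fun i : Fin p =>
    (∑ j ∈ Finset.univ.filter (· ≤ i), α j) ≤ x.1).card

namespace CMaux
open Finset

def pref (f : ℕ → ℕ) (k : ℕ) : ℕ := ∑ j ∈ Finset.range k, f j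

def nblk (f : ℕ → ℕ) (p m : ℕ) : ℕ :=
  ((Finset.range p).filter fun i => pref f (i + 1) ≤ m).card

lemma pref_mono (f : ℕ → ℕ) : Monotone (pref f) := fun _ _ h =>
  Finset.sum_le_sum_of_subset (Finset.range_subset_range.2 h)

lemma pref_succ (f : ℕ → ℕ) (k : ℕ) : pref f (k + 1) = pref f k + f k :=
  Finset.sum_range_succ f k

lemma nblk_le (f : ℕ → ℕ) (p m : ℕ) : nblk f p m ≤ p :=
  le_trans (Finset.card_filter_le _ _) (by simp)

lemma lt_nblk_iff (f : ℕ → ℕ) (p m : ℕ) {i : ℕ} (hi : i < p) :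
    i < nblk f p m ↔ pref f (i + 1) ≤ m := by
  constructor
  · intro h
    by_contra hc
    have hsub : ((Finset.range p).filter fun k => pref f (k + 1) ≤ m) ⊆ Finset.range i := by
      intro j hj
      rw [Finset.mem_filter] at hj
      rw [Finset.mem_range]
      by_contra hji
      push_neg at hji
      exact hc (le_trans (pref_mono f (by omega)) hj.2)
    have := Finset.card_le_card hsub
    rw [Finset.card_range] at this
    unfold nblk at h
    omega
  · intro h
    have hsub : Finset.range (i + 1) ⊆ (Finset.range p).filter fun k => pref f (k + 1) ≤ m := by
      intro j hj
      rw [Finset.mem_range] at hj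
      exact Finset.mem_filter.2 ⟨Finset.mem_range.2 (by omega),
        le_trans (pref_mono f (by omega)) h⟩
    have := Finset.card_le_card hsub
    rw [Finset.card_range] at this
    unfold nblk
    omega

lemma pref_nblk_le (f : ℕ → ℕ) (p m : ℕ) : pref f (nblk f p m) ≤ m := by
  rcases Nat.eq_zero_or_pos (nblk f p m) with h | h
  · rw [h]; exact Nat.zero_le m
  · have hk : nblk f p m - 1 < p := by have := nblk_le f p m; omega
    have := (lt_nblk_iff f p m hk).1 (by omega)
    have heq : nblk f p m - 1 + 1 = nblk f p m := by omega
    rwa [heq] at this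

lemma nblk_lt (f : ℕ → ℕ) (p m : ℕ) (hm : m < pref f p) : nblk f p m < p := by
  by_contra hc
  have h1 : nblk f p m = p := le_antisymm (nblk_le f p m) (by omega)
  have := pref_nblk_le f p m
  rw [h1] at this
  omega

lemma lt_pref_nblk_succ (f : ℕ → ℕ) (p m : ℕ) (hm : m < pref f p) :
    m < pref f (nblk f p m + 1) := by
  have hk := nblk_lt f p m hm
  by_contra hc
  push_neg at hc
  have := (lt_nblk_iff f p m hk).2 hc
  omega

lemma nblk_eq_of (f : ℕ → ℕ) (p m k : ℕ) (hm : m < pref f p)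
    (h1 : pref f k ≤ m) (h2 : m < pref f (k + 1)) : nblk f p m = k := by
  have hkp : k < p := by
    by_contra hc
    push_neg at hc
    exact absurd (le_trans (pref_mono f hc) h1) (by omega)
  have ha := pref_nblk_le f p m
  have hb := lt_pref_nblk_succ f p m hm
  set k' := nblk f p m with hk'
  rcases lt_trichotomy k' k with h | h | h
  · have : pref f (k' + 1) ≤ pref f k := pref_mono f (by omega)
    omega
  · exact h
  · have : pref f (k + 1) ≤ pref f k' := pref_mono f (by omega)
    omega

lemma nblk_fiber (f : ℕ → ℕ) (p N : ℕ) (hN : pref f p = N) (k : ℕ) (hk : k < p) :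
    ((Finset.range N).filter fun m => nblk f p m = k).card = f k := by
  have hset : ((Finset.range N).filter fun m => nblk f p m = k)
      = Finset.Ico (pref f k) (pref f (k + 1)) := by
    ext m
    simp only [Finset.mem_filter, Finset.mem_range, Finset.mem_Ico]
    constructor
    · rintro ⟨hm, rfl⟩
      exact ⟨pref_nblk_le f p m, lt_pref_nblk_succ f p m (by omega)⟩
    · rintro ⟨h1, h2⟩
      have hm : m < N := lt_of_lt_of_le h2 (hN ▸ pref_mono f (by omega))
      exact ⟨hm, nblk_eq_of f p m k (by omega) h1 h2⟩
  rw [hset, Nat.card_Ico, pref_succ]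
  omega

end CMaux

namespace CMaux
open Finset

def ext {p : ℕ} (α : Fin p → ℕ) : ℕ → ℕ := fun i => if h : i < p then α ⟨i, h⟩ else 0

lemma pref_ext_eq {p : ℕ} (α : Fin p → ℕ) (i : Fin p) :
    (∑ j ∈ Finset.univ.filter (· ≤ i), α j) = pref (ext α) (i.1 + 1) := by
  rw [Finset.sum_filter]
  have h1 : ∀ j : Fin p, (if j ≤ i then α j else 0)
      = (if j.1 ≤ i.1 then ext α j.1 else 0) := by
    intro j
    simp only [Fin.le_def, ext, j.isLt, dif_pos]
  rw [Finset.sum_congr rfl fun j _ => h1 j]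
  have h2 := Fin.sum_univ_eq_sum_range (fun m => if m ≤ i.1 then ext α m else 0) p
  rw [h2, ← Finset.sum_filter]
  have h3 : (Finset.range p).filter (fun m => m ≤ i.1) = Finset.range (i.1 + 1) := by
    ext m
    simp only [Finset.mem_filter, Finset.mem_range]
    have := i.isLt
    omega
  rw [h3, pref]

lemma pref_ext_top {p : ℕ} (α : Fin p → ℕ) : pref (ext α) p = ∑ i, α i := by
  rw [pref, ← Fin.sum_univ_eq_sum_range (fun j => ext α j) p]
  refine Finset.sum_congr rfl fun j _ => ?_
  simp [ext, j.isLt]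

lemma blk_eq_nblk {n p : ℕ} (α : Fin p → ℕ) (x : Fin n) :
    blk α x = nblk (ext α) p x.1 := by
  unfold blk nblk
  rw [Finset.filter_congr (fun i (_ : i ∈ Finset.univ) => by rw [pref_ext_eq α i])]
  apply Finset.card_bij (fun (i : Fin p) _ => i.1)
  · intro i hi
    simp only [Finset.mem_filter, Finset.mem_univ, true_and] at hi
    exact Finset.mem_filter.2 ⟨Finset.mem_range.2 i.isLt, hi⟩
  · intro a _ b _ h
    exact Fin.ext h
  · intro m hm
    simp only [Finset.mem_filter, Finset.mem_range] at hm
    exact ⟨⟨m, hm.1⟩, Finset.mem_filter.2 ⟨Finset.mem_univ _, hm.2⟩, rfl⟩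

lemma blk_lt {n p : ℕ} (α : Fin p → ℕ) (hαs : ∑ i, α i = n) (x : Fin n) :
    blk α x < p := by
  rw [blk_eq_nblk]
  exact nblk_lt _ p x.1 (by rw [pref_ext_top, hαs]; exact x.isLt)

lemma blk_fiber {n p : ℕ} (α : Fin p → ℕ) (hαs : ∑ i, α i = n) (k : Fin p) :
    ((Finset.univ : Finset (Fin n)).filter fun x => blk α x = k.1).card = α k := by
  have hb := nblk_fiber (ext α) p n (by rw [pref_ext_top, hαs]) k.1 k.isLt
  have : ext α k.1 = α k := by simp [ext, k.isLt]
  rw [this] at hb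
  rw [← hb]
  apply Finset.card_bij (fun (x : Fin n) _ => x.1)
  · intro x hx
    simp only [Finset.mem_filter, Finset.mem_univ, true_and] at hx
    exact Finset.mem_filter.2 ⟨Finset.mem_range.2 x.isLt, by rw [← blk_eq_nblk]; exact hx⟩
  · intro a _ b _ h
    exact Fin.ext h
  · intro m hm
    simp only [Finset.mem_filter, Finset.mem_range] at hm
    exact ⟨⟨m, hm.1⟩, Finset.mem_filter.2 ⟨Finset.mem_univ _, by rw [blk_eq_nblk]; exact hm.2⟩, rfl⟩

end CMaux

namespace CMaux
open Finset

lemma exists_perm_comp {n : ℕ} (f g : Fin n → ℕ × ℕ)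
    (h : ∀ c, (Finset.univ.filter fun x => f x = c).card
        = (Finset.univ.filter fun x => g x = c).card) :
    ∃ σ : Equiv.Perm (Fin n), ∀ x, g (σ x) = f x := by
  have e : ∀ c : ℕ × ℕ, {x // f x = c} ≃ {x // g x = c} := fun c =>
    Fintype.equivOfCardEq (by
      rw [Fintype.card_subtype, Fintype.card_subtype]; exact h c)
  refine ⟨(Equiv.sigmaFiberEquiv f).symm.trans
    ((Equiv.sigmaCongrRight e).trans (Equiv.sigmaFiberEquiv g)), fun x => ?_⟩
  have h1 : (Equiv.sigmaFiberEquiv f).symm x = ⟨f x, ⟨x, rfl⟩⟩ := by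
    apply (Equiv.sigmaFiberEquiv f).injective
    simp [Equiv.sigmaFiberEquiv]
  rw [Equiv.trans_apply, Equiv.trans_apply, h1]
  exact (e (f x) ⟨x, rfl⟩).2

variable {n p q : ℕ} (α : Fin p → ℕ) (β : Fin q → ℕ)

/-- the contingency cell count of a permutation -/
def cell (σ : Equiv.Perm (Fin n)) (i j : ℕ) : ℕ :=
  (Finset.univ.filter fun x : Fin n => blk α (σ x) = i ∧ blk β x = j).card

lemma cell_row (hαs : ∑ i, α i = n) (hβs : ∑ j, β j = n)
    (σ : Equiv.Perm (Fin n)) (i : Fin p) :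
    ∑ j : Fin q, cell α β σ i.1 j.1 = α i := by
  have hfib := Finset.card_eq_sum_card_fiberwise
    (f := fun x : Fin n => (⟨blk β x, blk_lt β hβs x⟩ : Fin q))
    (s := Finset.univ.filter fun x : Fin n => blk α (σ x) = i.1) (t := Finset.univ)
    (fun x _ => Finset.mem_univ _)
  have h2 : ∀ j : Fin q,
      ((Finset.univ.filter fun x : Fin n => blk α (σ x) = i.1).filter
        fun x => (⟨blk β x, blk_lt β hβs x⟩ : Fin q) = j)
      = Finset.univ.filter fun x : Fin n => blk α (σ x) = i.1 ∧ blk β x = j.1 := by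
    intro j
    ext x
    simp [Fin.ext_iff, and_comm]
    all_goals tauto
  rw [Finset.sum_congr rfl fun j _ => by rw [cell, ← h2 j]]
  rw [← hfib]
  have h3 : (Finset.univ.filter fun x : Fin n => blk α (σ x) = i.1).card
      = ((Finset.univ : Finset (Fin n)).filter fun y => blk α y = i.1).card := by
    apply Finset.card_bij' (fun x _ => σ x) (fun y _ => σ.symm y)
    · intro x hx
      simp only [Finset.mem_filter, Finset.mem_univ, true_and] at hx ⊢
      exact hx
    · intro y hy
      simp only [Finset.mem_filter, Finset.mem_univ, true_and] at hy ⊢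
      rw [Equiv.apply_symm_apply]
      exact hy
    · intro x _; exact σ.symm_apply_apply x
    · intro y _; exact σ.apply_symm_apply y
  rw [h3, blk_fiber α hαs i]

lemma cell_col (hαs : ∑ i, α i = n) (hβs : ∑ j, β j = n)
    (σ : Equiv.Perm (Fin n)) (j : Fin q) :
    ∑ i : Fin p, cell α β σ i.1 j.1 = β j := by
  have hfib := Finset.card_eq_sum_card_fiberwise
    (f := fun x : Fin n => (⟨blk α (σ x), blk_lt α hαs (σ x)⟩ : Fin p))
    (s := Finset.univ.filter fun x : Fin n => blk β x = j.1) (t := Finset.univ)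
    (fun x _ => Finset.mem_univ _)
  have h2 : ∀ i : Fin p,
      ((Finset.univ.filter fun x : Fin n => blk β x = j.1).filter
        fun x => (⟨blk α (σ x), blk_lt α hαs (σ x)⟩ : Fin p) = i)
      = Finset.univ.filter fun x : Fin n => blk α (σ x) = i.1 ∧ blk β x = j.1 := by
    intro i
    ext x
    simp [Fin.ext_iff]
    all_goals tauto
  rw [Finset.sum_congr rfl fun i _ => by rw [cell, ← h2 i]]
  rw [← hfib, blk_fiber β hβs j]

lemma cell_doset (σ a b : Equiv.Perm (Fin n))
    (ha : ∀ x, blk α (a x) = blk α x) (hb : ∀ x, blk β (b x) = blk β x) (i j : ℕ) :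
    cell α β (a * σ * b) i j = cell α β σ i j := by
  apply Finset.card_bij' (fun x _ => b x) (fun y _ => b.symm y)
  · intro x hx
    simp only [Finset.mem_filter, Finset.mem_univ, true_and] at hx ⊢
    have h1 : (a * σ * b) x = a (σ (b x)) := rfl
    rw [h1, ha] at hx
    exact ⟨hx.1, (hb x).symm ▸ hx.2⟩
  · intro y hy
    simp only [Finset.mem_filter, Finset.mem_univ, true_and] at hy ⊢
    have h1 : (a * σ * b) (b.symm y) = a (σ y) := by
      simp [Equiv.Perm.mul_apply]
    rw [h1, ha]
    refine ⟨hy.1, ?_⟩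
    have := hb (b.symm y)
    rw [Equiv.apply_symm_apply] at this
    rw [← this]
    exact hy.2
  · intro x _; exact b.symm_apply_apply x
  · intro y _; exact b.apply_symm_apply y

end CMaux

namespace CMaux
open Finset

variable {n p q : ℕ}

lemma blk_bounds {β : Fin q → ℕ} (hβs : ∑ j, β j = n) (x : Fin n) :
    pref (ext β) (blk β x) ≤ x.1 ∧ x.1 < pref (ext β) (blk β x + 1) := by
  rw [blk_eq_nblk]
  exact ⟨pref_nblk_le _ _ _,
    lt_pref_nblk_succ _ _ _ (by rw [pref_ext_top, hβs]; exact x.isLt)⟩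

lemma blk_eq_of {β : Fin q → ℕ} (hβs : ∑ j, β j = n) (x : Fin n) (j : ℕ)
    (h1 : pref (ext β) j ≤ x.1) (h2 : x.1 < pref (ext β) (j + 1)) : blk β x = j := by
  rw [blk_eq_nblk]
  exact nblk_eq_of _ _ _ _ (by rw [pref_ext_top, hβs]; exact x.isLt) h1 h2

lemma pref_ext_succ {β : Fin q → ℕ} {j : ℕ} (hj : j < q) :
    pref (ext β) (j + 1) = pref (ext β) j + β ⟨j, hj⟩ := by
  rw [pref_succ]; congr 1; simp [ext, hj]

lemma refine_fiber_in {β : Fin q → ℕ} (hβs : ∑ j, β j = n) {p : ℕ} (w : ℕ → ℕ → ℕ)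
    (hw : ∀ j : Fin q, pref (w j.1) p = β j) {i j : ℕ} (hj : j < q) (hi : i < p) :
    (Finset.univ.filter fun x : Fin n =>
      blk β x = j ∧ nblk (w j) p (x.1 - pref (ext β) j) = i).card = w j i := by
  have hwj : pref (w j) p = β ⟨j, hj⟩ := hw ⟨j, hj⟩
  have hfib := nblk_fiber (w j) p (β ⟨j, hj⟩) hwj i hi
  rw [← hfib]
  apply Finset.card_bij (fun (x : Fin n) _ => x.1 - pref (ext β) j)
  · intro x hx
    simp only [Finset.mem_filter, Finset.mem_univ, true_and] at hx
    have hb := blk_bounds hβs x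
    rw [hx.1] at hb
    rw [pref_ext_succ hj] at hb
    exact Finset.mem_filter.2 ⟨Finset.mem_range.2 (by omega), hx.2⟩
  · intro x1 hx1 x2 hx2 h
    simp only [Finset.mem_filter, Finset.mem_univ, true_and] at hx1 hx2
    have hb1 := (blk_bounds hβs x1).1
    have hb2 := (blk_bounds hβs x2).1
    rw [hx1.1] at hb1
    rw [hx2.1] at hb2
    exact Fin.ext (by omega)
  · intro r hr
    simp only [Finset.mem_filter, Finset.mem_range] at hr
    have hjq : j + 1 ≤ q := hj
    have hxlt : pref (ext β) j + r < n := by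
      have h1 : pref (ext β) j + r < pref (ext β) (j + 1) := by
        rw [pref_ext_succ hj]; omega
      have h2 : pref (ext β) (j + 1) ≤ pref (ext β) q := pref_mono _ hjq
      have h3 : pref (ext β) q = n := by rw [pref_ext_top, hβs]
      omega
    refine ⟨⟨pref (ext β) j + r, hxlt⟩, Finset.mem_filter.2 ⟨Finset.mem_univ _, ?_, ?_⟩,
      by simp only [Fin.val_mk]; omega⟩
    · apply blk_eq_of hβs _ j (by simp only [Fin.val_mk]; omega)
      rw [pref_ext_succ hj]
      simp only
      omega
    · simpa using hr.2

lemma refine_fiber_out {β : Fin q → ℕ} (hβs : ∑ j, β j = n) {p : ℕ} (w : ℕ → ℕ → ℕ)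
    (hw : ∀ j : Fin q, pref (w j.1) p = β j) {i j : ℕ} (hj : j < q) (hi : p ≤ i) :
    (Finset.univ.filter fun x : Fin n =>
      blk β x = j ∧ nblk (w j) p (x.1 - pref (ext β) j) = i).card = 0 := by
  rw [Finset.card_eq_zero, Finset.filter_eq_empty_iff]
  intro x _
  rintro ⟨h1, h2⟩
  have hb := blk_bounds hβs x
  rw [h1, pref_ext_succ hj] at hb
  have hlt : x.1 - pref (ext β) j < pref (w j) p := by rw [hw ⟨j, hj⟩]; omega
  have := nblk_lt (w j) p _ hlt
  omega

lemma refine_fiber_outq {β : Fin q → ℕ} (hβs : ∑ j, β j = n) (P : Fin n → Prop)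
    [DecidablePred P] {j : ℕ} (hj : q ≤ j) :
    (Finset.univ.filter fun x : Fin n => blk β x = j ∧ P x).card = 0 := by
  rw [Finset.card_eq_zero, Finset.filter_eq_empty_iff]
  intro x _
  rintro ⟨h1, _⟩
  have := blk_lt β hβs x
  omega

end CMaux

/-- The Young (parabolic) subgroup `S_α ⊆ S_n`: permutations preserving each of the
consecutive blocks of sizes `α_1, …, α_p`. -/
def youngSubgroup (n : ℕ) {p : ℕ} (α : Fin p → ℕ) : Subgroup (Equiv.Perm (Fin n)) where
  carrier := {σ | ∀ x, blk α (σ x) = blk α x}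
  one_mem' := fun _ => rfl
  mul_mem' := by
    intro a b ha hb x
    have : (a * b) x = a (b x) := rfl
    rw [this, ha (b x), hb x]
  inv_mem' := by
    intro a ha x
    have := ha (a⁻¹ x)
    rw [show a (a⁻¹ x) = x from a.apply_symm_apply x] at this; exact this.symm

namespace CMaux
open Finset

variable {n p q : ℕ}

lemma cell_zero (α : Fin p → ℕ) (β : Fin q → ℕ) (hαs : ∑ i, α i = n)
    (hβs : ∑ j, β j = n) (σ : Equiv.Perm (Fin n)) {i j : ℕ} (hij : ¬(i < p ∧ j < q)) :
    cell α β σ i j = 0 := by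
  rw [cell, Finset.card_eq_zero, Finset.filter_eq_empty_iff]
  intro x _
  rintro ⟨h1, h2⟩
  have := blk_lt α hαs (σ x)
  have := blk_lt β hβs x
  omega

lemma exists_perm_cell (α : Fin p → ℕ) (β : Fin q → ℕ) (hαs : ∑ i, α i = n)
    (hβs : ∑ j, β j = n) (M : Matrix (Fin p) (Fin q) ℕ)
    (hrow : ∀ i, ∑ j, M i j = α i) (hcol : ∀ j, ∑ i, M i j = β j) :
    ∃ σ : Equiv.Perm (Fin n), ∀ (i : Fin p) (j : Fin q), cell α β σ i.1 j.1 = M i j := by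
  classical
  set w : ℕ → ℕ → ℕ := fun i j => if h : i < p ∧ j < q then M ⟨i, h.1⟩ ⟨j, h.2⟩ else 0 with hwdef
  have hwcol : ∀ j : Fin q, pref (fun i => w i j.1) p = β j := by
    intro j
    rw [pref, ← Fin.sum_univ_eq_sum_range (fun i => w i j.1) p, ← hcol j]
    refine Finset.sum_congr rfl fun i _ => ?_
    simp [hwdef, i.isLt, j.isLt]
  have hwrow : ∀ i : Fin p, pref (w i.1) q = α i := by
    intro i
    rw [pref, ← Fin.sum_univ_eq_sum_range (fun j => w i.1 j) q, ← hrow i]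
    refine Finset.sum_congr rfl fun j _ => ?_
    simp [hwdef, i.isLt, j.isLt]
  set g : Fin n → ℕ × ℕ := fun x =>
    (nblk (fun i => w i (blk β x)) p (x.1 - pref (ext β) (blk β x)), blk β x) with hgdef
  set h : Fin n → ℕ × ℕ := fun x =>
    (blk α x, nblk (w (blk α x)) q (x.1 - pref (ext α) (blk α x))) with hhdef
  have hgfib : ∀ i j : ℕ, (Finset.univ.filter fun x => g x = (i, j)).card
      = if i < p ∧ j < q then w i j else 0 := by
    intro i j
    have hset : (Finset.univ.filter fun x => g x = (i, j))
        = Finset.univ.filter fun x : Fin n =>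
            blk β x = j ∧ nblk (fun i' => w i' j) p (x.1 - pref (ext β) j) = i := by
      ext x
      simp only [Finset.mem_filter, Finset.mem_univ, true_and, hgdef, Prod.mk.injEq]
      constructor
      · rintro ⟨h1, h2⟩
        rw [h2] at h1
        exact ⟨h2, h1⟩
      · rintro ⟨h1, h2⟩
        rw [h1]
        exact ⟨h2, rfl⟩
    rw [hset]
    by_cases hj : j < q
    · by_cases hi : i < p
      · rw [refine_fiber_in hβs (fun j' i' => w i' j') (fun j' => hwcol j') hj hi,
          if_pos ⟨hi, hj⟩]
      · rw [refine_fiber_out hβs (fun j' i' => w i' j') (fun j' => hwcol j') hj (by omega)]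
        simp [hi]
    · rw [refine_fiber_outq hβs _ (by omega)]
      simp [hj]
  have hhfib : ∀ i j : ℕ, (Finset.univ.filter fun x => h x = (i, j)).card
      = if i < p ∧ j < q then w i j else 0 := by
    intro i j
    have hset : (Finset.univ.filter fun x => h x = (i, j))
        = Finset.univ.filter fun x : Fin n =>
            blk α x = i ∧ nblk (w i) q (x.1 - pref (ext α) i) = j := by
      ext x
      simp only [Finset.mem_filter, Finset.mem_univ, true_and, hhdef, Prod.mk.injEq]
      constructor
      · rintro ⟨h1, h2⟩
        rw [h1] at h2
        exact ⟨h1, h2⟩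
      · rintro ⟨h1, h2⟩
        rw [h1]
        exact ⟨rfl, h2⟩
    rw [hset]
    by_cases hi : i < p
    · by_cases hj : j < q
      · rw [refine_fiber_in hαs w hwrow hi hj, if_pos ⟨hi, hj⟩]
      · rw [refine_fiber_out hαs w hwrow hi (by omega)]
        simp [hj]
    · rw [refine_fiber_outq hαs _ (by omega)]
      simp [hi]
  obtain ⟨σ, hσ⟩ := exists_perm_comp g h (by
    intro c
    rcases c with ⟨i, j⟩
    rw [hgfib i j, hhfib i j])
  refine ⟨σ, fun i j => ?_⟩
  have hset : (Finset.univ.filter fun x : Fin n => blk α (σ x) = i.1 ∧ blk β x = j.1)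
      = Finset.univ.filter fun x => g x = (i.1, j.1) := by
    ext x
    simp only [Finset.mem_filter, Finset.mem_univ, true_and, Prod.ext_iff]
    have h1 : blk α (σ x) = (h (σ x)).1 := rfl
    have h2 : blk β x = (g x).2 := rfl
    rw [h1, h2, hσ x]
  rw [cell, hset, hgfib]
  simp [hwdef, i.isLt, j.isLt]

lemma cell_eq_imp (α : Fin p → ℕ) (β : Fin q → ℕ) (hαs : ∑ i, α i = n)
    (hβs : ∑ j, β j = n) (σ τ : Equiv.Perm (Fin n))
    (hc : ∀ (i : Fin p) (j : Fin q), cell α β σ i.1 j.1 = cell α β τ i.1 j.1) :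
    ∃ a ∈ youngSubgroup n α, ∃ b ∈ youngSubgroup n β, τ = a * σ * b := by
  classical
  have hcall : ∀ i j : ℕ, cell α β σ i j = cell α β τ i j := by
    intro i j
    by_cases hij : i < p ∧ j < q
    · exact hc ⟨i, hij.1⟩ ⟨j, hij.2⟩
    · rw [cell_zero α β hαs hβs σ hij, cell_zero α β hαs hβs τ hij]
  obtain ⟨b, hbp⟩ := exists_perm_comp (fun x => (blk α (τ x), blk β x))
    (fun x => (blk α (σ x), blk β x)) (by
      intro c
      have h1 : ∀ (ρ : Equiv.Perm (Fin n)),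
          (Finset.univ.filter fun x => (blk α (ρ x), blk β x) = c)
          = Finset.univ.filter fun x : Fin n => blk α (ρ x) = c.1 ∧ blk β x = c.2 := by
        intro ρ
        ext x
        simp [Prod.ext_iff]
      rw [h1, h1, ← cell, ← cell, hcall])
  have hb1 : ∀ x, blk α (σ (b x)) = blk α (τ x) := fun x => congrArg Prod.fst (hbp x)
  have hb2 : ∀ x, blk β (b x) = blk β x := fun x => congrArg Prod.snd (hbp x)
  refine ⟨τ * b⁻¹ * σ⁻¹, ?_, b, hb2, by group⟩
  intro y
  have key : (τ * b⁻¹ * σ⁻¹) y = τ (b⁻¹ (σ⁻¹ y)) := rfl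
  rw [key]
  have := hb1 (b⁻¹ (σ⁻¹ y))
  rw [show (b (b⁻¹ (σ⁻¹ y))) = σ⁻¹ y from b.apply_symm_apply _,
    show σ (σ⁻¹ y) = y from σ.apply_symm_apply y] at this
  exact this.symm

end CMaux

/-- for ordered partitions `α`, `β` of `n`, contingency matrices with
row margins `α` and column margins `β` are in bijection with `S_α \ S_n / S_β`. -/
theorem cm_margins_equiv_double_cosets (n p q : ℕ) (α : Fin p → ℕ) (β : Fin q → ℕ)
    (hα : ∀ i, 0 < α i) (hβ : ∀ j, 0 < β j)
    (hαs : ∑ i, α i = n) (hβs : ∑ j, β j = n) :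
    Nonempty
      ({M : Matrix (Fin p) (Fin q) ℕ //
          (∀ i, ∑ j, M i j = α i) ∧ (∀ j, ∑ i, M i j = β j)} ≃
        DoubleCoset.Quotient (↑(youngSubgroup n α) : Set (Equiv.Perm (Fin n)))
          (↑(youngSubgroup n β) : Set (Equiv.Perm (Fin n)))) := by
  classical
  set CM := {M : Matrix (Fin p) (Fin q) ℕ //
      (∀ i, ∑ j, M i j = α i) ∧ (∀ j, ∑ i, M i j = β j)} with hCM
  set Φ : Equiv.Perm (Fin n) → CM := fun σ =>
    ⟨Matrix.of fun i j => CMaux.cell α β σ i.1 j.1,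
      fun i => CMaux.cell_row α β hαs hβs σ i,
      fun j => CMaux.cell_col α β hαs hβs σ j⟩ with hΦ
  have hwell : ∀ σ τ : Equiv.Perm (Fin n),
      DoubleCoset.setoid (↑(youngSubgroup n α) : Set (Equiv.Perm (Fin n)))
        (↑(youngSubgroup n β)) σ τ → Φ σ = Φ τ := by
    intro σ τ hrel
    rw [DoubleCoset.rel_iff] at hrel
    obtain ⟨a, ha, b, hb, rfl⟩ := hrel
    apply Subtype.ext
    funext i j
    exact (CMaux.cell_doset α β σ a b ha hb i.1 j.1).symm
  set ψ : DoubleCoset.Quotient (↑(youngSubgroup n α) : Set (Equiv.Perm (Fin n)))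
      (↑(youngSubgroup n β)) → CM := Quotient.lift Φ hwell with hψ
  have hinj : Function.Injective ψ := by
    intro z w
    induction z using Quotient.inductionOn' with
    | h σ =>
    induction w using Quotient.inductionOn' with
    | h τ =>
    intro h
    have hmat : ∀ (i : Fin p) (j : Fin q),
        CMaux.cell α β σ i.1 j.1 = CMaux.cell α β τ i.1 j.1 := by
      intro i j
      have := congrArg Subtype.val h
      exact congrFun (congrFun this i) j
    obtain ⟨a, ha, b, hb, hab⟩ := CMaux.cell_eq_imp α β hαs hβs σ τ hmat
    exact Quotient.sound' (DoubleCoset.rel_iff.mpr ⟨a, ha, b, hb, hab⟩)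
  have hsurj : Function.Surjective ψ := by
    rintro ⟨M, hrow, hcol⟩
    obtain ⟨σ, hσ⟩ := CMaux.exists_perm_cell α β hαs hβs M hrow hcol
    refine ⟨Quotient.mk'' σ, ?_⟩
    apply Subtype.ext
    funext i j
    exact hσ i j
  exact ⟨(Equiv.ofBijective ψ ⟨hinj, hsurj⟩).symm⟩
end
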